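/- For every nonnegative integer K, every integer 0 ≤ k ≤ K, and all K-order networks N_X, N_Y, N_Z, the k-order network distance satisfies the triangle inequality d_N^k(N_X,N_Y) ≤ d_N^k(N_X,N_Z) + d_N^k(N_Z,N_Y). -/

import Mathlib

open scoped ENNReal

/-- A correspondence between node sets `X` and `Y`: a set of pairs in which every
`x : X` and every `y : Y` appears. -/
def IsCorrespondence {X Y : Type} (C : Set (X × Y)) : Prop :=
  (∀ x : X, ∃ y : Y, (x, y) ∈ C) ∧ (∀ y : Y, ∃ x : X, (x, y) ∈ C)

/-- The rank of a tuple: the number of distinct elements appearing in it. -/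
noncomputable def tupleRank {X : Type} {n : ℕ} (t : Fin n → X) : ℕ :=
  Set.ncard (Set.range t)

/-- A `K`-order network on a finite nonempty node set `X`: relationship functions
`r k : X^{k+1} → [0,1]` for `0 ≤ k ≤ K`, symmetric under permutations of the arguments,
and such that any subtuple with the same set of distinct elements as the full tuple
carries the same relationship value. -/
structure HONetwork (K : ℕ) (X : Type) [Fintype X] [Nonempty X] : Type where
  r : ∀ k : ℕ, (Fin (k + 1) → X) → ℝ
  r_nonneg : ∀ k, k ≤ K → ∀ t : Fin (k + 1) → X, 0 ≤ r k t
  r_le_one : ∀ k, k ≤ K → ∀ t : Fin (k + 1) → X, r k t ≤ 1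
  symm : ∀ k, k ≤ K → ∀ (t : Fin (k + 1) → X) (σ : Equiv.Perm (Fin (k + 1))),
    r k (t ∘ σ) = r k t
  identity : ∀ k, k ≤ K → ∀ k', k' ≤ K → ∀ (t : Fin (k + 1) → X)
    (ι : Fin (k' + 1) → Fin (k + 1)), StrictMono ι →
    Set.range (t ∘ ι) = Set.range t → r k' (t ∘ ι) = r k t

/-- The `k`-order network difference `Γ^k_{X,Y}(C)`: the largest value of
`|r_X^k(x_{0:k}) − r_Y^k(y_{0:k})|` over tuples of pairs of correspondents in `C`. -/
noncomputable def Gamma {K : ℕ} {X Y : Type} [Fintype X] [Nonempty X] [Fintype Y] [Nonempty Y]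
    (NX : HONetwork K X) (NY : HONetwork K Y) (k : ℕ) (C : Set (X × Y)) : ℝ :=
  sSup { v : ℝ | ∃ (tx : Fin (k + 1) → X) (ty : Fin (k + 1) → Y),
    (∀ i, (tx i, ty i) ∈ C) ∧ v = |NX.r k tx - NY.r k ty| }

/-- The `k`-order network distance: minimum of `Γ^k_{X,Y}(C)` over correspondences `C`. -/
noncomputable def dN {K : ℕ} {X Y : Type} [Fintype X] [Nonempty X] [Fintype Y] [Nonempty Y]
    (k : ℕ) (NX : HONetwork K X) (NY : HONetwork K Y) : ℝ :=
  sInf { v : ℝ | ∃ C : Set (X × Y), IsCorrespondence C ∧ v = Gamma NX NY k C }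

/-- The `p`-norm of a vector in `ℝ^{K+1}`, `1 ≤ p ≤ ∞`. -/
noncomputable def pNorm (K : ℕ) (p : ℝ≥0∞) [Fact (1 ≤ p)] (v : Fin (K + 1) → ℝ) : ℝ :=
  ‖(WithLp.equiv p (Fin (K + 1) → ℝ)).symm v‖

/-- The `p`-norm network distance: minimum over correspondences `C` of the `p`-norm of the
vector `(Γ^0_{X,Y}(C), …, Γ^K_{X,Y}(C))`. -/
noncomputable def dNp {K : ℕ} {X Y : Type} [Fintype X] [Nonempty X] [Fintype Y] [Nonempty Y]
    (p : ℝ≥0∞) [Fact (1 ≤ p)] (NX : HONetwork K X) (NY : HONetwork K Y) : ℝ :=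
  sInf { v : ℝ | ∃ C : Set (X × Y), IsCorrespondence C ∧
    v = pNorm K p (fun k : Fin (K + 1) => Gamma NX NY (k : ℕ) C) }

/-- Two `K`-order networks are `k`-isomorphic if a bijection of the node sets preserves the
`k`-order relationship functions. -/
def kIsomorphic {K : ℕ} {X Y : Type} [Fintype X] [Nonempty X] [Fintype Y] [Nonempty Y]
    (k : ℕ) (NX : HONetwork K X) (NY : HONetwork K Y) : Prop :=
  ∃ φ : X ≃ Y, ∀ t : Fin (k + 1) → X, NY.r k (fun i => φ (t i)) = NX.r k t

/-- Two `K`-order networks are isomorphic if a bijection of the node sets preserves the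
`k`-order relationship functions for all `0 ≤ k ≤ K`. -/
def Isomorphic {K : ℕ} {X Y : Type} [Fintype X] [Nonempty X] [Fintype Y] [Nonempty Y]
    (NX : HONetwork K X) (NY : HONetwork K Y) : Prop :=
  ∃ φ : X ≃ Y, ∀ k, k ≤ K → ∀ t : Fin (k + 1) → X, NY.r k (fun i => φ (t i)) = NX.r k t

/-- A `K`-order dissimilarity network: a `K`-order network whose relationship functions
decompose as `r^k = d^k + ε · rank`, with nonnegative dissimilarity functions `d^k`
satisfying the order increasing property, and `0 < ε ≤ 1 − (1/K) · max d^K`. -/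
structure DissimNetwork (K : ℕ) (X : Type) [Fintype X] [Nonempty X]
    extends HONetwork K X where
  dfun : ∀ k : ℕ, (Fin (k + 1) → X) → ℝ
  eps : ℝ
  dfun_nonneg : ∀ k, k ≤ K → ∀ t : Fin (k + 1) → X, 0 ≤ dfun k t
  decomp : ∀ k, k ≤ K → ∀ t : Fin (k + 1) → X,
    r k t = dfun k t + eps * (tupleRank t : ℝ)
  order_incr : ∀ k : ℕ, k + 1 ≤ K → ∀ t : Fin (k + 2) → X,
    dfun k (fun i : Fin (k + 1) => t i.castSucc) ≤ dfun (k + 1) t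
  eps_pos : 0 < eps
  eps_le : ∀ t : Fin (K + 1) → X, eps ≤ 1 - (1 / (K : ℝ)) * dfun K t

/-- A `K`-order proximity network: a `K`-order network whose relationship functions
decompose as `r^k = p^k − ε · rank`, with nonnegative proximity functions `p^k`
satisfying the order decreasing property, and `0 < ε ≤ (1/K) · min p^K`. -/
structure ProxNetwork (K : ℕ) (X : Type) [Fintype X] [Nonempty X]
    extends HONetwork K X where
  pfun : ∀ k : ℕ, (Fin (k + 1) → X) → ℝ
  eps : ℝ
  pfun_nonneg : ∀ k, k ≤ K → ∀ t : Fin (k + 1) → X, 0 ≤ pfun k t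
  decomp : ∀ k, k ≤ K → ∀ t : Fin (k + 1) → X,
    r k t = pfun k t - eps * (tupleRank t : ℝ)
  order_decr : ∀ k : ℕ, k + 1 ≤ K → ∀ t : Fin (k + 2) → X,
    pfun (k + 1) t ≤ pfun k (fun i : Fin (k + 1) => t i.castSucc)
  eps_pos : 0 < eps
  eps_le : ∀ t : Fin (K + 1) → X, eps ≤ (1 / (K : ℝ)) * pfun K t

/-! Composing a correspondence `X ~ Z` with one `Z ~ Y` gives a correspondence `X ~ Y`, and a tuple
of pairs in the composite lifts, through intermediate points of `Z`, to tuples in the two factors;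
the triangle inequality for `|·|` then bounds `Γ` of the composite by the sum of the two `Γ`s.
Since there are only finitely many correspondences between finite sets, both distances on the
right are attained, which turns this bound into the triangle inequality for `d_N^k`. -/

open SetRel

lemma IsCorrespondence.comp {X Y Z : Type} {C₁ : Set (X × Z)} {C₂ : Set (Z × Y)}
    (h₁ : IsCorrespondence C₁) (h₂ : IsCorrespondence C₂) :
    IsCorrespondence (C₁ ○ C₂) := by
  constructor
  · intro x
    obtain ⟨z, hxz⟩ := h₁.1 x
    obtain ⟨y, hzy⟩ := h₂.1 z
    exact ⟨y, prodMk_mem_comp hxz hzy⟩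
  · intro y
    obtain ⟨z, hzy⟩ := h₂.2 y
    obtain ⟨x, hxz⟩ := h₁.2 z
    exact ⟨x, prodMk_mem_comp hxz hzy⟩

section Gamma

variable {K : ℕ} {X Y Z : Type} [Fintype X] [Nonempty X] [Fintype Y] [Nonempty Y]
  [Fintype Z] [Nonempty Z]

lemma Gamma_nonneg (NX : HONetwork K X) (NY : HONetwork K Y) (k : ℕ) (C : Set (X × Y)) :
    0 ≤ Gamma NX NY k C :=
  Real.sSup_nonneg <| by
    rintro _ ⟨tx, ty, -, rfl⟩
    exact abs_nonneg _

lemma le_Gamma (NX : HONetwork K X) (NY : HONetwork K Y) {k : ℕ} {C : Set (X × Y)}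
    {tx : Fin (k + 1) → X} {ty : Fin (k + 1) → Y} (h : ∀ i, (tx i, ty i) ∈ C) :
    |NX.r k tx - NY.r k ty| ≤ Gamma NX NY k C := by
  have hfin : Set.Finite { v : ℝ | ∃ (tx : Fin (k + 1) → X) (ty : Fin (k + 1) → Y),
      (∀ i, (tx i, ty i) ∈ C) ∧ v = |NX.r k tx - NY.r k ty| } :=
    (Set.finite_range fun t : (Fin (k + 1) → X) × (Fin (k + 1) → Y) =>
      |NX.r k t.1 - NY.r k t.2|).subset <| by
        rintro _ ⟨tx, ty, -, rfl⟩
        exact ⟨(tx, ty), rfl⟩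
  exact le_csSup hfin.bddAbove ⟨tx, ty, h, rfl⟩

lemma Gamma_comp_le (NX : HONetwork K X) (NY : HONetwork K Y) (NZ : HONetwork K Z) (k : ℕ)
    (C₁ : Set (X × Z)) (C₂ : Set (Z × Y)) :
    Gamma NX NY k (C₁ ○ C₂) ≤ Gamma NX NZ k C₁ + Gamma NZ NY k C₂ := by
  refine Real.sSup_le ?_ (add_nonneg (Gamma_nonneg ..) (Gamma_nonneg ..))
  rintro _ ⟨tx, ty, hxy, rfl⟩
  choose tz hxz hzy using hxy
  calc |NX.r k tx - NY.r k ty|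
      ≤ |NX.r k tx - NZ.r k tz| + |NZ.r k tz - NY.r k ty| := abs_sub_le _ _ _
    _ ≤ Gamma NX NZ k C₁ + Gamma NZ NY k C₂ :=
      add_le_add (le_Gamma NX NZ hxz) (le_Gamma NZ NY hzy)

end Gamma

section dN

variable {K : ℕ} {X Y : Type} [Fintype X] [Nonempty X] [Fintype Y] [Nonempty Y]

lemma finite_setOf_isCorrespondence_Gamma (NX : HONetwork K X) (NY : HONetwork K Y) (k : ℕ) :
    Set.Finite { v : ℝ | ∃ C : Set (X × Y), IsCorrespondence C ∧ v = Gamma NX NY k C } :=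
  (Set.finite_range fun C : Set (X × Y) => Gamma NX NY k C).subset <| by
    rintro _ ⟨C, -, rfl⟩
    exact ⟨C, rfl⟩

lemma dN_le_Gamma (NX : HONetwork K X) (NY : HONetwork K Y) (k : ℕ) {C : Set (X × Y)}
    (hC : IsCorrespondence C) : dN k NX NY ≤ Gamma NX NY k C :=
  csInf_le (finite_setOf_isCorrespondence_Gamma NX NY k).bddBelow ⟨C, hC, rfl⟩

lemma exists_isCorrespondence_Gamma_eq_dN (NX : HONetwork K X) (NY : HONetwork K Y) (k : ℕ) :
    ∃ C : Set (X × Y), IsCorrespondence C ∧ Gamma NX NY k C = dN k NX NY := by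
  have huniv : IsCorrespondence (Set.univ : Set (X × Y)) :=
    ⟨fun _ => ⟨Classical.arbitrary Y, trivial⟩, fun _ => ⟨Classical.arbitrary X, trivial⟩⟩
  obtain ⟨C, hC, hdN⟩ : dN k NX NY ∈ _ :=
    Set.Nonempty.csInf_mem ⟨_, .univ, huniv, rfl⟩ (finite_setOf_isCorrespondence_Gamma ..)
  exact ⟨C, hC, hdN.symm⟩

end dN

theorem dN_triangle_general (K k : ℕ)
    (X Y Z : Type) [Fintype X] [Nonempty X] [Fintype Y] [Nonempty Y] [Fintype Z] [Nonempty Z]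
    (NX : HONetwork K X) (NY : HONetwork K Y) (NZ : HONetwork K Z) :
    dN k NX NY ≤ dN k NX NZ + dN k NZ NY := by
  obtain ⟨C₁, hC₁, hdN₁⟩ := exists_isCorrespondence_Gamma_eq_dN NX NZ k
  obtain ⟨C₂, hC₂, hdN₂⟩ := exists_isCorrespondence_Gamma_eq_dN NZ NY k
  calc dN k NX NY ≤ Gamma NX NY k (C₁ ○ C₂) := dN_le_Gamma NX NY k (hC₁.comp hC₂)
    _ ≤ Gamma NX NZ k C₁ + Gamma NZ NY k C₂ := Gamma_comp_le NX NY NZ k C₁ C₂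
    _ = dN k NX NZ + dN k NZ NY := by rw [hdN₁, hdN₂]

/-- the `k`-order network distance satisfies the triangle inequality. -/
theorem dN_triangle (K k : ℕ) (hk : k ≤ K)
    (X Y Z : Type) [Fintype X] [Nonempty X] [Fintype Y] [Nonempty Y] [Fintype Z] [Nonempty Z]
    (NX : HONetwork K X) (NY : HONetwork K Y) (NZ : HONetwork K Z) :
    dN k NX NY ≤ dN k NX NZ + dN k NZ NY :=
  dN_triangle_general K k X Y Z NX NY NZ
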